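/- arXiv:1802.06676 — 3 statements merged into one kernel-verified Lean document; each statement's English description precedes it below -/
import Mathlib

section
/- Suppose δ ∈ (0,1) and for every pair x, y ∈ Ω with φ(x,y) = 1 there exists a coupling ν_{x,y} of P(x,·) and P(y,·) such that ∑_{(x',y') ∈ Ω×Ω} ν_{x,y}(x',y')·φ(x',y') ≤ 1 − δ. Then for all states σ, σ' ∈ Ω and every integer t ≥ 0, the total variation distance d_TV(P^t(σ,·), P^t(σ',·)) is at most n·(1−δ)^t. -/
open Finset

attribute [local instance] Classical.propDecidable

namespace PathCoupling

/-- Total variation distance between two distributions on a finite set. -/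
noncomputable def dTV {Ω : Type*} [Fintype Ω] (μ ν : Ω → ℝ) : ℝ :=
  (1 / 2) * ∑ x : Ω, |μ x - ν x|

/-- Hamming distance `φ(x,y) = |{v : x v ≠ y v}|` between two colorings. -/
noncomputable def hamming {V : Type*} [Fintype V] {q : ℕ} (x y : V → Fin q) : ℕ :=
  (univ.filter (fun v : V => x v ≠ y v)).card

/-- `t`-step iterate of a transition matrix `P` on a finite state space. -/
noncomputable def matPow {Ω : Type*} [Fintype Ω] [DecidableEq Ω] (P : Ω → Ω → ℝ) :
    ℕ → Ω → Ω → ℝ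
  | 0 => fun x y => if x = y then 1 else 0
  | t + 1 => fun x y => ∑ z : Ω, matPow P t x z * P z y

section Aux

variable {Ω : Type*} [Fintype Ω]

lemma term_zero {f : Ω → ℝ} (h0 : ∀ a, 0 ≤ f a) (h : ∑ a, f a = 0) (a : Ω) : f a = 0 :=
  (Finset.sum_eq_zero_iff_of_nonneg (fun i _ => h0 i)).mp h a (mem_univ a)

/-- Composition of two couplings, with additive cost bound. -/
lemma compose (φ : Ω × Ω → ℝ) (hφ0 : ∀ s, 0 ≤ φ s)
    (hφtri : ∀ a b c, φ (a, c) ≤ φ (a, b) + φ (b, c))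
    (p q r : Ω → ℝ)
    (ν1 ν2 : Ω × Ω → ℝ)
    (h10 : ∀ s, 0 ≤ ν1 s) (h11 : ∀ a, ∑ b, ν1 (a, b) = p a) (h12 : ∀ b, ∑ a, ν1 (a, b) = q b)
    (h20 : ∀ s, 0 ≤ ν2 s) (h21 : ∀ b, ∑ c, ν2 (b, c) = q b) (h22 : ∀ c, ∑ b, ν2 (b, c) = r c) :
    ∃ ν : Ω × Ω → ℝ, (∀ s, 0 ≤ ν s) ∧ (∀ a, ∑ c, ν (a, c) = p a) ∧
      (∀ c, ∑ a, ν (a, c) = r c) ∧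
      ∑ s, ν s * φ s ≤ ∑ s, ν1 s * φ s + ∑ s, ν2 s * φ s := by
  classical
  set w : Ω → ℝ := fun b => if q b = 0 then 0 else (q b)⁻¹ with hw
  have hq0 : ∀ b, 0 ≤ q b := fun b => by
    rw [← h12 b]; exact Finset.sum_nonneg fun a _ => h10 _
  have hw0 : ∀ b, 0 ≤ w b := fun b => by
    simp only [hw]; split
    · exact le_refl 0
    · exact inv_nonneg.mpr (hq0 b)
  have hz1 : ∀ a b, q b = 0 → ν1 (a, b) = 0 := fun a b hb =>
    term_zero (f := fun a' => ν1 (a', b)) (fun a' => h10 _) (by rw [h12 b, hb]) a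
  have hz2 : ∀ b c, q b = 0 → ν2 (b, c) = 0 := fun b c hb =>
    term_zero (f := fun c' => ν2 (b, c')) (fun c' => h20 _) (by rw [h21 b, hb]) c
  have key1 : ∀ a b, w b * ν1 (a, b) * q b = ν1 (a, b) := by
    intro a b
    by_cases hb : q b = 0
    · simp [hw, hb, hz1 a b hb]
    · simp only [hw, if_neg hb]; field_simp
  have key2 : ∀ b c, w b * q b * ν2 (b, c) = ν2 (b, c) := by
    intro b c
    by_cases hb : q b = 0
    · simp [hw, hb, hz2 b c hb]
    · simp only [hw, if_neg hb]; field_simp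
  set ν : Ω × Ω → ℝ := fun s => ∑ b, w b * (ν1 (s.1, b) * ν2 (b, s.2)) with hν
  have hνap : ∀ a c, ν (a, c) = ∑ b, w b * (ν1 (a, b) * ν2 (b, c)) := fun a c => rfl
  refine ⟨ν, ?_, ?_, ?_, ?_⟩
  · intro s
    exact Finset.sum_nonneg fun b _ => mul_nonneg (hw0 b) (mul_nonneg (h10 _) (h20 _))
  · intro a
    simp only [hνap]
    rw [Finset.sum_comm, ← h11 a]
    refine Finset.sum_congr rfl fun b _ => ?_
    rw [← Finset.mul_sum, ← Finset.mul_sum, h21 b]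
    calc w b * (ν1 (a, b) * q b) = w b * ν1 (a, b) * q b := by ring
      _ = ν1 (a, b) := key1 a b
  · intro c
    simp only [hνap]
    rw [Finset.sum_comm, ← h22 c]
    refine Finset.sum_congr rfl fun b _ => ?_
    have hpt : ∀ a, w b * (ν1 (a, b) * ν2 (b, c)) = ν1 (a, b) * (w b * ν2 (b, c)) := by
      intro a; ring
    simp only [hpt]
    rw [← Finset.sum_mul, h12 b]
    calc q b * (w b * ν2 (b, c)) = w b * q b * ν2 (b, c) := by ring
      _ = ν2 (b, c) := key2 b c
  · calc ∑ s : Ω × Ω, ν s * φ s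
        = ∑ s : Ω × Ω, ∑ b, w b * (ν1 (s.1, b) * ν2 (b, s.2)) * φ s := by
          refine Finset.sum_congr rfl fun s _ => ?_
          rw [hν, Finset.sum_mul]
      _ ≤ ∑ s : Ω × Ω, ∑ b, w b * (ν1 (s.1, b) * ν2 (b, s.2)) * (φ (s.1, b) + φ (b, s.2)) := by
          refine Finset.sum_le_sum fun s _ => Finset.sum_le_sum fun b _ => ?_
          refine mul_le_mul_of_nonneg_left ?_
            (mul_nonneg (hw0 b) (mul_nonneg (h10 _) (h20 _)))
          have := hφtri s.1 b s.2
          simpa using this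
      _ = ∑ b, ∑ s : Ω × Ω, w b * (ν1 (s.1, b) * ν2 (b, s.2)) * (φ (s.1, b) + φ (b, s.2)) :=
          Finset.sum_comm
      _ = ∑ b, ((∑ a, ν1 (a, b) * φ (a, b)) + ∑ c, ν2 (b, c) * φ (b, c)) := by
          refine Finset.sum_congr rfl fun b _ => ?_
          rw [Fintype.sum_prod_type]
          have expand : ∀ a c, w b * (ν1 (a, b) * ν2 (b, c)) * (φ (a, b) + φ (b, c))
              = (w b * ν1 (a, b) * φ (a, b)) * ν2 (b, c)
                + ν1 (a, b) * (w b * ν2 (b, c) * φ (b, c)) := by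
            intro a c; ring
          simp only [expand, Finset.sum_add_distrib]
          congr 1
          · refine Finset.sum_congr rfl fun a _ => ?_
            rw [← Finset.mul_sum, h21 b]
            calc w b * ν1 (a, b) * φ (a, b) * q b
                = (w b * ν1 (a, b) * q b) * φ (a, b) := by ring
              _ = ν1 (a, b) * φ (a, b) := by rw [key1 a b]
          · rw [Finset.sum_comm]
            refine Finset.sum_congr rfl fun c _ => ?_
            rw [← Finset.sum_mul, h12 b]
            calc q b * (w b * ν2 (b, c) * φ (b, c))
                = (w b * q b * ν2 (b, c)) * φ (b, c) := by ring
              _ = ν2 (b, c) * φ (b, c) := by rw [key2 b c]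
      _ = ∑ s : Ω × Ω, ν1 s * φ s + ∑ s : Ω × Ω, ν2 s * φ s := by
          rw [Finset.sum_add_distrib, Fintype.sum_prod_type, Fintype.sum_prod_type]
          congr 1
          exact Finset.sum_comm

/-- dTV is bounded by the expected "distance" of any coupling, for any distance that is
at least 1 off the diagonal and nonnegative. -/
lemma dTV_le_cost (μ1 μ2 : Ω → ℝ) (φ : Ω × Ω → ℝ)
    (hφ0 : ∀ s, 0 ≤ φ s) (hφ1 : ∀ s : Ω × Ω, s.1 ≠ s.2 → 1 ≤ φ s)
    (ν : Ω × Ω → ℝ) (h0 : ∀ s, 0 ≤ ν s)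
    (h1 : ∀ a, ∑ c, ν (a, c) = μ1 a) (h2 : ∀ c, ∑ a, ν (a, c) = μ2 c) :
    dTV μ1 μ2 ≤ ∑ s, ν s * φ s := by
  classical
  have hdiag1 : ∀ x, ν (x, x) ≤ μ1 x := by
    intro x
    rw [← h1 x]
    exact Finset.single_le_sum (fun c _ => h0 (x, c)) (mem_univ x)
  have hdiag2 : ∀ x, ν (x, x) ≤ μ2 x := by
    intro x
    rw [← h2 x]
    exact Finset.single_le_sum (fun a _ => h0 (a, x)) (mem_univ x)
  have key : ∀ x, |μ1 x - μ2 x| ≤ (μ1 x - ν (x, x)) + (μ2 x - ν (x, x)) := by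
    intro x
    have h1' := hdiag1 x
    have h2' := hdiag2 x
    rw [abs_le]
    constructor <;> linarith
  have hμ1tot : ∑ x, μ1 x = ∑ s : Ω × Ω, ν s := by
    rw [Fintype.sum_prod_type]
    exact (Finset.sum_congr rfl fun a _ => (h1 a)).symm ▸ rfl
  have hμ2tot : ∑ x, μ2 x = ∑ s : Ω × Ω, ν s := by
    rw [Fintype.sum_prod_type, Finset.sum_comm]
    exact Finset.sum_congr rfl fun c _ => (h2 c).symm
  have hμ1tot' : ∑ x, μ1 x = ∑ s : Ω × Ω, ν s := by
    rw [Fintype.sum_prod_type]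
    exact Finset.sum_congr rfl fun a _ => (h1 a).symm
  have hdiagsum : ∑ x, ν (x, x) = ∑ s : Ω × Ω, if s.1 = s.2 then ν s else 0 := by
    rw [Fintype.sum_prod_type]
    refine Finset.sum_congr rfl fun x _ => ?_
    simp [Finset.sum_ite_eq]
  have hbound : ∑ s : Ω × Ω, ν s ≤ (∑ x, ν (x, x)) + ∑ s : Ω × Ω, ν s * φ s := by
    rw [hdiagsum, ← Finset.sum_add_distrib]
    refine Finset.sum_le_sum fun s _ => ?_
    by_cases h : s.1 = s.2
    · rw [if_pos h]
      have : 0 ≤ ν s * φ s := mul_nonneg (h0 s) (hφ0 s)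
      linarith
    · rw [if_neg h]
      have : ν s ≤ ν s * φ s := le_mul_of_one_le_right (h0 s) (hφ1 s h)
      linarith
  have sum_bound : ∑ x, |μ1 x - μ2 x| ≤ 2 * ∑ s : Ω × Ω, ν s * φ s := by
    calc ∑ x, |μ1 x - μ2 x| ≤ ∑ x, ((μ1 x - ν (x, x)) + (μ2 x - ν (x, x))) :=
          Finset.sum_le_sum fun x _ => key x
      _ = (∑ x, μ1 x) + (∑ x, μ2 x) - 2 * ∑ x, ν (x, x) := by
          rw [Finset.sum_add_distrib, Finset.sum_sub_distrib, Finset.sum_sub_distrib]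
          ring
      _ ≤ 2 * ∑ s : Ω × Ω, ν s * φ s := by
          rw [hμ1tot', hμ2tot]
          linarith
  rw [dTV]
  linarith

end Aux

section Colorings

variable {V : Type*} [Fintype V] [DecidableEq V] {q : ℕ}

lemma hamming_self (x : V → Fin q) : hamming x x = 0 := by
  simp [hamming]

lemma hamming_eq_zero {x y : V → Fin q} (h : hamming x y = 0) : x = y := by
  funext v
  by_contra hv
  have hmem : v ∈ univ.filter (fun v => x v ≠ y v) := mem_filter.mpr ⟨mem_univ v, hv⟩
  unfold hamming at h
  rw [Finset.card_eq_zero] at h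
  rw [h] at hmem
  exact notMem_empty v hmem

lemma hamming_pos {x y : V → Fin q} (h : x ≠ y) : 1 ≤ hamming x y := by
  obtain ⟨v, hv⟩ := Function.ne_iff.mp h
  have : v ∈ univ.filter (fun v => x v ≠ y v) := mem_filter.mpr ⟨mem_univ v, hv⟩
  exact Finset.card_pos.mpr ⟨v, this⟩

lemma hamming_le_card (x y : V → Fin q) : hamming x y ≤ Fintype.card V :=
  (Finset.card_filter_le _ _)

lemma hamming_triangle (a b c : V → Fin q) :
    hamming a c ≤ hamming a b + hamming b c := by
  unfold hamming
  refine le_trans (Finset.card_le_card ?_) (Finset.card_union_le _ _)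
  intro v hv
  simp only [mem_filter, mem_union, mem_univ, true_and] at *
  by_contra h
  push_neg at h
  exact hv (h.1.trans h.2)

lemma hamming_split {x y : V → Fin q} {d : ℕ} (h : hamming x y = d + 1) :
    ∃ z : V → Fin q, hamming x z = 1 ∧ hamming z y = d := by
  classical
  have hne : (univ.filter fun v => x v ≠ y v).Nonempty := by
    rw [← Finset.card_pos]
    unfold hamming at h
    omega
  obtain ⟨v, hv⟩ := hne
  have hvxy : x v ≠ y v := (mem_filter.mp hv).2
  refine ⟨Function.update x v (y v), ?_, ?_⟩
  · have h1 : (univ.filter fun w => x w ≠ Function.update x v (y v) w) = {v} := by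
      ext w
      simp only [mem_filter, mem_univ, true_and, mem_singleton]
      rcases eq_or_ne w v with rfl | hw
      · simp [Function.update_self, hvxy]
      · simp [Function.update_of_ne hw, hw]
    unfold hamming
    rw [h1, Finset.card_singleton]
  · have h2 : (univ.filter fun w => Function.update x v (y v) w ≠ y w)
        = (univ.filter fun w => x w ≠ y w).erase v := by
      ext w
      rcases eq_or_ne w v with rfl | hw
      · simp [Function.update_self]
      · simp [Function.update_of_ne hw, hw, Finset.mem_erase]
    unfold hamming
    rw [h2, Finset.card_erase_of_mem hv]
    unfold hamming at h
    omega

variable (P : (V → Fin q) → (V → Fin q) → ℝ)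

/-- One-step coupling with contraction for arbitrary Hamming distance. -/
lemma claimA
    (hP0 : ∀ x y : V → Fin q, 0 ≤ P x y)
    (δ : ℝ) (hδ1 : δ < 1)
    (hcoupling : ∀ x y : V → Fin q, hamming x y = 1 →
      ∃ ν : (V → Fin q) × (V → Fin q) → ℝ,
        (∀ p, 0 ≤ ν p) ∧
        (∀ x' : V → Fin q, ∑ y' : V → Fin q, ν (x', y') = P x x') ∧
        (∀ y' : V → Fin q, ∑ x' : V → Fin q, ν (x', y') = P y y') ∧
        ∑ p : (V → Fin q) × (V → Fin q), ν p * (hamming p.1 p.2 : ℝ) ≤ 1 - δ) :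
    ∀ d : ℕ, ∀ x y : V → Fin q, hamming x y = d →
      ∃ ν : (V → Fin q) × (V → Fin q) → ℝ, (∀ s, 0 ≤ ν s) ∧
        (∀ a, ∑ c, ν (a, c) = P x a) ∧ (∀ c, ∑ a, ν (a, c) = P y c) ∧
        ∑ s : (V → Fin q) × (V → Fin q), ν s * (hamming s.1 s.2 : ℝ) ≤ (d : ℝ) * (1 - δ) := by
  intro d
  induction d with
  | zero =>
    intro x y hxy
    have hxy' : x = y := hamming_eq_zero hxy
    subst hxy'
    refine ⟨fun s => if s.1 = s.2 then P x s.1 else 0, ?_, ?_, ?_, ?_⟩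
    · intro s
      dsimp only
      split
      · exact hP0 _ _
      · exact le_refl 0
    · intro a
      simp [Finset.sum_ite_eq]
    · intro c
      simp [Finset.sum_ite_eq']
    · have : ∀ s : (V → Fin q) × (V → Fin q),
          (if s.1 = s.2 then P x s.1 else 0) * (hamming s.1 s.2 : ℝ) = 0 := by
        intro s
        by_cases h : s.1 = s.2
        · rw [h, hamming_self]; simp
        · rw [if_neg h, zero_mul]
      rw [Finset.sum_congr rfl fun s _ => this s]
      simp
  | succ d ih =>
    intro x y hxy
    obtain ⟨z, hxz, hzy⟩ := hamming_split hxy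
    obtain ⟨ν1, h10, h11, h12, h1E⟩ := hcoupling x z hxz
    obtain ⟨ν2, h20, h21, h22, h2E⟩ := ih z y hzy
    obtain ⟨ν, hn0, hn1, hn2, hnE⟩ := compose (fun s => (hamming s.1 s.2 : ℝ))
      (fun s => Nat.cast_nonneg _)
      (fun a b c => by
        show ((hamming a c : ℕ) : ℝ) ≤ ((hamming a b : ℕ) : ℝ) + ((hamming b c : ℕ) : ℝ)
        exact_mod_cast hamming_triangle a b c)
      (P x) (P z) (P y) ν1 ν2 h10 h11 h12 h20 h21 h22
    refine ⟨ν, hn0, hn1, hn2, ?_⟩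
    refine le_trans hnE ?_
    push_cast
    nlinarith [h1E, h2E]

/-- `t`-step coupling with geometric contraction. -/
lemma claimB
    (hP0 : ∀ x y : V → Fin q, 0 ≤ P x y)
    (hP1 : ∀ x : V → Fin q, ∑ y : V → Fin q, P x y = 1)
    (δ : ℝ) (hδ1 : δ < 1)
    (hcoupling : ∀ x y : V → Fin q, hamming x y = 1 →
      ∃ ν : (V → Fin q) × (V → Fin q) → ℝ,
        (∀ p, 0 ≤ ν p) ∧
        (∀ x' : V → Fin q, ∑ y' : V → Fin q, ν (x', y') = P x x') ∧
        (∀ y' : V → Fin q, ∑ x' : V → Fin q, ν (x', y') = P y y') ∧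
        ∑ p : (V → Fin q) × (V → Fin q), ν p * (hamming p.1 p.2 : ℝ) ≤ 1 - δ)
    (σ σ' : V → Fin q) :
    ∀ t : ℕ, ∃ ν : (V → Fin q) × (V → Fin q) → ℝ, (∀ s, 0 ≤ ν s) ∧
      (∀ a, ∑ c, ν (a, c) = matPow P t σ a) ∧ (∀ c, ∑ a, ν (a, c) = matPow P t σ' c) ∧
      ∑ s : (V → Fin q) × (V → Fin q), ν s * (hamming s.1 s.2 : ℝ)
        ≤ (hamming σ σ' : ℝ) * (1 - δ) ^ t := by
  classical
  intro t
  induction t with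
  | zero =>
    refine ⟨fun s => if s = (σ, σ') then 1 else 0, ?_, ?_, ?_, ?_⟩
    · intro s
      dsimp only
      split
      · exact zero_le_one
      · exact le_refl 0
    · intro a
      simp only [matPow, Prod.mk.injEq, ite_and]
      by_cases h : σ = a
      · subst h
        simp [Finset.sum_ite_eq']
      · rw [if_neg h]
        refine Finset.sum_eq_zero fun c _ => ?_
        rw [if_neg (fun hc => h hc.symm)]
    · intro c
      simp only [matPow, Prod.mk.injEq, ite_and]
      by_cases h : σ' = c
      · subst h
        simp [Finset.sum_ite_eq']
      · rw [if_neg h]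
        refine Finset.sum_eq_zero fun a _ => ?_
        by_cases ha : a = σ
        · rw [if_pos ha, if_neg (fun hc => h hc.symm)]
        · rw [if_neg ha]
    · show ∑ s : (V → Fin q) × (V → Fin q),
          (if s = (σ, σ') then (1 : ℝ) else 0) * (hamming s.1 s.2 : ℝ)
          ≤ (hamming σ σ' : ℝ) * (1 - δ) ^ 0
      have e : ∀ s : (V → Fin q) × (V → Fin q),
          (if s = (σ, σ') then (1 : ℝ) else 0) * (hamming s.1 s.2 : ℝ)
          = if s = (σ, σ') then (hamming σ σ' : ℝ) else 0 := by
        intro s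
        by_cases h : s = (σ, σ')
        · subst h; simp
        · simp [h]
      rw [Finset.sum_congr rfl fun s _ => e s]
      simp [Finset.sum_ite_eq']
  | succ t ih =>
    obtain ⟨ν, h0, hm1, hm2, hE⟩ := ih
    have hA := claimA P hP0 δ hδ1 hcoupling
    choose κ hκ0 hκ1 hκ2 hκE using fun x y : V → Fin q => hA (hamming x y) x y rfl
    refine ⟨fun s => ∑ x, ∑ y, ν (x, y) * κ x y s, ?_, ?_, ?_, ?_⟩
    · intro s
      exact Finset.sum_nonneg fun x _ => Finset.sum_nonneg fun y _ =>
        mul_nonneg (h0 _) (hκ0 x y s)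
    · intro a
      calc ∑ c, ∑ x, ∑ y, ν (x, y) * κ x y (a, c)
          = ∑ x, ∑ c, ∑ y, ν (x, y) * κ x y (a, c) := Finset.sum_comm
        _ = ∑ x, ∑ y, ∑ c, ν (x, y) * κ x y (a, c) :=
            Finset.sum_congr rfl fun x _ => Finset.sum_comm
        _ = ∑ x, ∑ y, ν (x, y) * P x a := by
            refine Finset.sum_congr rfl fun x _ => Finset.sum_congr rfl fun y _ => ?_
            rw [← Finset.mul_sum, hκ1 x y a]
        _ = ∑ x, matPow P t σ x * P x a := by
            refine Finset.sum_congr rfl fun x _ => ?_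
            rw [← Finset.sum_mul, hm1 x]
        _ = matPow P (t + 1) σ a := rfl
    · intro c
      calc ∑ a, ∑ x, ∑ y, ν (x, y) * κ x y (a, c)
          = ∑ x, ∑ a, ∑ y, ν (x, y) * κ x y (a, c) := Finset.sum_comm
        _ = ∑ x, ∑ y, ∑ a, ν (x, y) * κ x y (a, c) :=
            Finset.sum_congr rfl fun x _ => Finset.sum_comm
        _ = ∑ y, ∑ x, ∑ a, ν (x, y) * κ x y (a, c) := Finset.sum_comm
        _ = ∑ y, ∑ x, ν (x, y) * P y c := by
            refine Finset.sum_congr rfl fun y _ => Finset.sum_congr rfl fun x _ => ?_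
            rw [← Finset.mul_sum, hκ2 x y c]
        _ = ∑ y, matPow P t σ' y * P y c := by
            refine Finset.sum_congr rfl fun y _ => ?_
            rw [← Finset.sum_mul, hm2 y]
        _ = matPow P (t + 1) σ' c := rfl
    · have hδ0' : (0 : ℝ) ≤ 1 - δ := by linarith
      calc ∑ s : (V → Fin q) × (V → Fin q),
            (∑ x, ∑ y, ν (x, y) * κ x y s) * (hamming s.1 s.2 : ℝ)
          = ∑ x, ∑ y, ∑ s : (V → Fin q) × (V → Fin q),
              ν (x, y) * (κ x y s * (hamming s.1 s.2 : ℝ)) := by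
            have e1 : ∀ s : (V → Fin q) × (V → Fin q),
                (∑ x, ∑ y, ν (x, y) * κ x y s) * (hamming s.1 s.2 : ℝ)
                = ∑ x, ∑ y, ν (x, y) * (κ x y s * (hamming s.1 s.2 : ℝ)) := by
              intro s
              rw [Finset.sum_mul]
              refine Finset.sum_congr rfl fun x _ => ?_
              rw [Finset.sum_mul]
              exact Finset.sum_congr rfl fun y _ => by ring
            rw [Finset.sum_congr rfl fun s _ => e1 s, Finset.sum_comm]
            exact Finset.sum_congr rfl fun x _ => Finset.sum_comm
        _ = ∑ x, ∑ y, ν (x, y) * ∑ s : (V → Fin q) × (V → Fin q),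
              κ x y s * (hamming s.1 s.2 : ℝ) := by
            refine Finset.sum_congr rfl fun x _ => Finset.sum_congr rfl fun y _ => ?_
            rw [Finset.mul_sum]
        _ ≤ ∑ x, ∑ y, ν (x, y) * ((hamming x y : ℝ) * (1 - δ)) := by
            refine Finset.sum_le_sum fun x _ => Finset.sum_le_sum fun y _ => ?_
            exact mul_le_mul_of_nonneg_left (hκE x y) (h0 (x, y))
        _ = (1 - δ) * ∑ s : (V → Fin q) × (V → Fin q), ν s * (hamming s.1 s.2 : ℝ) := by
            rw [Finset.mul_sum, Fintype.sum_prod_type]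
            refine Finset.sum_congr rfl fun x _ => Finset.sum_congr rfl fun y _ => ?_
            ring
        _ ≤ (1 - δ) * ((hamming σ σ' : ℝ) * (1 - δ) ^ t) :=
            mul_le_mul_of_nonneg_left hE hδ0'
        _ = (hamming σ σ' : ℝ) * (1 - δ) ^ (t + 1) := by ring

end Colorings

end PathCoupling

open PathCoupling in
/-- Path Coupling Lemma, contraction form: under the same coupling hypothesis,
for all initial states `σ, σ'` and every `t ≥ 0`,
`d_TV(P^t(σ,·), P^t(σ',·)) ≤ n·(1−δ)^t`. -/
theorem path_coupling_contraction {V : Type*} [Fintype V] [DecidableEq V] (q : ℕ) (hq : 1 ≤ q)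
    (hn : 2 ≤ Fintype.card V)
    (P : (V → Fin q) → (V → Fin q) → ℝ)
    (hP0 : ∀ x y : V → Fin q, 0 ≤ P x y)
    (hP1 : ∀ x : V → Fin q, ∑ y : V → Fin q, P x y = 1)
    (μ : (V → Fin q) → ℝ) (hμ0 : ∀ x, 0 ≤ μ x) (hμ1 : ∑ x : V → Fin q, μ x = 1)
    (hstat : ∀ y : V → Fin q, ∑ x : V → Fin q, μ x * P x y = μ y)
    (δ : ℝ) (hδ0 : 0 < δ) (hδ1 : δ < 1)
    (hcoupling : ∀ x y : V → Fin q, hamming x y = 1 →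
      ∃ ν : (V → Fin q) × (V → Fin q) → ℝ,
        (∀ p, 0 ≤ ν p) ∧
        (∀ x' : V → Fin q, ∑ y' : V → Fin q, ν (x', y') = P x x') ∧
        (∀ y' : V → Fin q, ∑ x' : V → Fin q, ν (x', y') = P y y') ∧
        ∑ p : (V → Fin q) × (V → Fin q), ν p * (hamming p.1 p.2 : ℝ) ≤ 1 - δ) :
    ∀ σ σ' : V → Fin q, ∀ t : ℕ,
      dTV (matPow P t σ) (matPow P t σ') ≤ (Fintype.card V : ℝ) * (1 - δ) ^ t := by
  intro σ σ' t
  obtain ⟨ν, h0, h1, h2, hE⟩ := claimB P hP0 hP1 δ hδ1 hcoupling σ σ' t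
  have hφ0 : ∀ s : (V → Fin q) × (V → Fin q), (0 : ℝ) ≤ (hamming s.1 s.2 : ℝ) :=
    fun s => Nat.cast_nonneg _
  have hφ1 : ∀ s : (V → Fin q) × (V → Fin q), s.1 ≠ s.2 → (1 : ℝ) ≤ (hamming s.1 s.2 : ℝ) :=
    fun s hs => by exact_mod_cast hamming_pos hs
  refine le_trans (dTV_le_cost (matPow P t σ) (matPow P t σ')
    (fun s => (hamming s.1 s.2 : ℝ)) hφ0 hφ1 ν h0 h1 h2) ?_
  refine le_trans hE ?_
  have hc := hamming_le_card σ σ'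
  have hp : (0 : ℝ) ≤ (1 - δ) ^ t := pow_nonneg (by linarith) t
  exact mul_le_mul_of_nonneg_right (by exact_mod_cast hc) hp
end

section
/- For all colorings σ, τ ∈ [q]^V that are both proper colorings of G, the transition probabilities of the Local Glauber dynamics satisfy the symmetry P(σ, τ) = P(τ, σ). -/
open Finset

attribute [local instance] Classical.propDecidable

namespace LocalGlauber

variable {V : Type*} [Fintype V] [DecidableEq V]

/-- A coloring is proper if adjacent vertices get different colors. -/
def IsProper (G : SimpleGraph V) {q : ℕ} (σ : V → Fin q) : Prop :=
  ∀ ⦃x y : V⦄, G.Adj x y → σ x ≠ σ y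

/-- The acceptance condition of the Local Glauber dynamics at node `v`, given the
current coloring `σ` and the proposals `c` (with `c u = σ u` for unmarked nodes):
`c v ∉ ⋃_{u ∈ N(v)} {σ u, c u}` and `c u ∉ {σ v, c v}` for every neighbor `u`. -/
def Accept (G : SimpleGraph V) {q : ℕ} (σ c : V → Fin q) (v : V) : Prop :=
  ∀ u : V, G.Adj v u → c v ≠ σ u ∧ c v ≠ c u ∧ c u ≠ σ v ∧ c u ≠ c v

/-- One step of the Local Glauber dynamics, given proposals `c`
(nodes with `c v = σ v`, in particular unmarked nodes, never change state). -/
noncomputable def glauberStep (G : SimpleGraph V) {q : ℕ} (σ c : V → Fin q) : V → Fin q :=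
  fun v => if Accept G σ c v then c v else σ v

/-- Probability weight of the random choice `(m, c)`: each node is marked (`m v = true`)
independently with probability `γ`; a marked node proposes a uniform color in `[q]`;
an unmarked node proposes its current color. -/
noncomputable def glauberWeight {q : ℕ} (γ : ℝ) (σ : V → Fin q) (m : V → Bool)
    (c : V → Fin q) : ℝ :=
  ∏ v : V, (if m v then γ / q else if c v = σ v then 1 - γ else 0)

/-- Transition matrix of the Local Glauber dynamics. -/
noncomputable def P (G : SimpleGraph V) (q : ℕ) (γ : ℝ) (σ τ : V → Fin q) : ℝ :=
  ∑ m : V → Bool, ∑ c : V → Fin q,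
    if glauberStep G σ c = τ then glauberWeight γ σ m c else 0

/-- `t`-step iterate of the transition matrix. -/
noncomputable def Pt (G : SimpleGraph V) (q : ℕ) (γ : ℝ) : ℕ → (V → Fin q) → (V → Fin q) → ℝ
  | 0 => fun σ τ => if σ = τ then 1 else 0
  | t + 1 => fun σ τ => ∑ ρ : V → Fin q, Pt G q γ t σ ρ * P G q γ ρ τ

/-- Uniform distribution over the proper `q`-colorings of `G`. -/
noncomputable def uniformProper (G : SimpleGraph V) (q : ℕ) (σ : V → Fin q) : ℝ :=
  if IsProper G σ then
    1 / ((univ.filter (fun τ : V → Fin q => IsProper G τ)).card : ℝ)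
  else 0

/-- Total variation distance between two distributions on a finite set. -/
noncomputable def dTV {Ω : Type*} [Fintype Ω] (μ ν : Ω → ℝ) : ℝ :=
  (1 / 2) * ∑ x : Ω, |μ x - ν x|

end LocalGlauber

/-!
For proper `σ, τ`, the map `c ↦ c'` with `c' v = swap (σ v) (τ v) (c v)` is a bijection of proposal
vectors that preserves the weight for each marking and satisfies `step(σ, c) = τ ↔ step(τ, c') = σ`.
The key point is that a move keeps the unordered pair {state, proposal} of every node, while the
acceptance test only asks that the proposal of `v` avoid the pair of each neighbour and vice versa;
properness of `σ` then shows that a node accepted in the forward move is accepted in the reverse one.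
-/

namespace LocalGlauber

variable {V : Type*} {q : ℕ}

/-- Proposals that undo a move `σ → τ` made with proposals `c`: an accepted node proposes its old
color back, a rejected node repeats its proposal. -/
def swapProposals (σ τ : V → Fin q) : (V → Fin q) ≃ (V → Fin q) :=
  Equiv.piCongrRight fun v => Equiv.swap (σ v) (τ v)

@[simp]
lemma swapProposals_apply (σ τ c : V → Fin q) (v : V) :
    swapProposals σ τ c v = Equiv.swap (σ v) (τ v) (c v) :=
  rfl

lemma swapProposals_swapProposals (σ τ c : V → Fin q) :
    swapProposals τ σ (swapProposals σ τ c) = c := by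
  ext v
  simp [Equiv.swap_comm (τ v)]

lemma glauberWeight_swapProposals [Fintype V] (γ : ℝ) (σ τ : V → Fin q) (m : V → Bool)
    (c : V → Fin q) :
    glauberWeight γ τ m (swapProposals σ τ c) = glauberWeight γ σ m c := by
  unfold glauberWeight
  congr! 3 with v
  rw [swapProposals_apply, Equiv.swap_apply_eq_iff, Equiv.swap_apply_right]

variable (G : SimpleGraph V)

lemma accept_iff_forall_notMem (σ c : V → Fin q) (v : V) :
    Accept G σ c v ↔ ∀ u, G.Adj v u → c v ∉ s(σ u, c u) ∧ c u ∉ s(σ v, c v) := by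
  simp only [Accept, Sym2.mem_iff, not_or, and_assoc]

lemma mk_glauberStep_swapProposals (σ c : V → Fin q) (u : V) :
    s(glauberStep G σ c u, swapProposals σ (glauberStep G σ c) c u) = s(σ u, c u) := by
  by_cases h : Accept G σ c u <;> simp [glauberStep, h, Sym2.eq_swap]

variable {G}

lemma accept_of_accept_glauberStep_swapProposals {σ c : V → Fin q} {v : V}
    (h : Accept G (glauberStep G σ c) (swapProposals σ (glauberStep G σ c) c) v) :
    Accept G σ c v := by
  by_contra hv
  have hpair := mk_glauberStep_swapProposals G σ c
  set τ := glauberStep G σ c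
  set c' := swapProposals σ τ c
  have hc'v : c' v = c v := by simp [c', τ, glauberStep, hv]
  refine hv ((accept_iff_forall_notMem G σ c v).2 fun u huv => ?_)
  obtain ⟨hcv, hc'u⟩ := (accept_iff_forall_notMem G τ c' v).1 h u huv
  rw [hpair, hc'v] at hcv
  rw [hpair] at hc'u
  refine ⟨hcv, ?_⟩
  by_cases hu : Accept G σ c u
  · obtain ⟨hcuσv, hcucv, -, -⟩ := hu v huv.symm
    simp [Sym2.mem_iff, hcuσv, hcucv]
  · have hc'u_eq : c' u = c u := by simp [c', τ, glauberStep, hu]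
    rwa [hc'u_eq] at hc'u

lemma accept_glauberStep_swapProposals {σ c : V → Fin q} {v : V} (hσ : IsProper G σ)
    (hv : Accept G σ c v) :
    Accept G (glauberStep G σ c) (swapProposals σ (glauberStep G σ c) c) v := by
  have hpair := mk_glauberStep_swapProposals G σ c
  set τ := glauberStep G σ c
  set c' := swapProposals σ τ c
  have hc'v : c' v = σ v := by simp [c', τ, glauberStep, hv]
  refine (accept_iff_forall_notMem G τ c' v).2 fun u huv => ?_
  obtain ⟨hcvσu, -, hcuσv, hcucv⟩ := hv u huv
  have hσuv := hσ huv.symm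
  have hc'u : c' u ∈ s(σ u, c u) := hpair u ▸ Sym2.mem_mk_right _ _
  rw [hpair, hpair, hc'v]
  simp only [Sym2.mem_iff, not_or] at hc'u ⊢
  refine ⟨⟨hσuv.symm, hcuσv.symm⟩, ?_⟩
  rcases hc'u with h | h <;> rw [h]
  · exact ⟨hσuv, fun h => hcvσu h.symm⟩
  · exact ⟨hcuσv, hcucv⟩

lemma glauberStep_glauberStep_swapProposals {σ : V → Fin q} (hσ : IsProper G σ)
    (c : V → Fin q) :
    glauberStep G (glauberStep G σ c) (swapProposals σ (glauberStep G σ c) c) = σ := by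
  funext v
  rw [glauberStep, if_congr ⟨accept_of_accept_glauberStep_swapProposals,
    accept_glauberStep_swapProposals hσ⟩ rfl rfl]
  by_cases hv : Accept G σ c v <;> simp [glauberStep, hv]

lemma glauberStep_swapProposals_eq_iff {σ τ : V → Fin q} (hσ : IsProper G σ)
    (hτ : IsProper G τ) (c : V → Fin q) :
    glauberStep G τ (swapProposals σ τ c) = σ ↔ glauberStep G σ c = τ := by
  constructor
  · intro h
    simpa [h, swapProposals_swapProposals] using
      glauberStep_glauberStep_swapProposals hτ (swapProposals σ τ c)
  · rintro rfl
    exact glauberStep_glauberStep_swapProposals hσ c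

end LocalGlauber

open LocalGlauber in
theorem local_glauber_symmetric_general {V : Type*} [Fintype V] [DecidableEq V]
    (G : SimpleGraph V) (q : ℕ) (γ : ℝ)
    (σ τ : V → Fin q) (hσ : IsProper G σ) (hτ : IsProper G τ) :
    P G q γ σ τ = P G q γ τ σ := by
  refine Finset.sum_congr rfl fun m _ => Fintype.sum_equiv (swapProposals σ τ) _ _ fun c => ?_
  simp only [glauberStep_swapProposals_eq_iff hσ hτ, glauberWeight_swapProposals]

open LocalGlauber in
/-- For proper colorings `σ, τ`, the Local Glauber dynamics is symmetric:
`P(σ, τ) = P(τ, σ)`. -/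
theorem local_glauber_symmetric {V : Type*} [Fintype V] [DecidableEq V]
    (G : SimpleGraph V) (q : ℕ) (γ : ℝ) (hγ0 : 0 < γ) (hγ1 : γ < 1)
    (σ τ : V → Fin q) (hσ : IsProper G σ) (hτ : IsProper G τ) :
    P G q γ σ τ = P G q γ τ σ :=
  local_glauber_symmetric_general G q γ σ τ hσ hτ
end

section
/- If q ≥ Δ + 1, then the uniform distribution μ over the (nonempty) set of proper q-colorings of G is a stationary distribution of the Local Glauber dynamics: for every τ ∈ [q]^V, ∑_{σ ∈ [q]^V} μ(σ)·P(σ, τ) = μ(τ). -/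
open Finset

attribute [local instance] Classical.propDecidable

/-!
Detailed balance. From a proper coloring `σ` and proposals `c`, let `σ' = glauberStep G σ c`
and let `c'` swap current color and proposal at every accepting node. The acceptance
conditions of `(σ', c')` and `(σ, c)` coincide node by node, so `(σ', c')` leads back to `σ`,
and the map `(σ, c) ↦ (σ', c')` is an involution preserving the weight of every marking.
Hence `P σ τ = P τ σ` on proper colorings; since proper colorings are closed under the
dynamics and `P` is stochastic, the uniform distribution on them is stationary.
-/

theorem Finset.sum_filter_eq_ite_of_symm {Ω R : Type*} [Fintype Ω] [AddCommMonoid R] [One R]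
    (p : Ω → Prop) [DecidablePred p] (K : Ω → Ω → R) (hsymm : ∀ σ τ, p σ → p τ → K σ τ = K τ σ)
    (hclosed : ∀ σ τ, p σ → ¬ p τ → K σ τ = 0) (hsum : ∀ σ, p σ → ∑ τ, K σ τ = 1) (τ : Ω) :
    ∑ σ with p σ, K σ τ = if p τ then 1 else 0 := by
  split_ifs with hτ
  · calc ∑ σ with p σ, K σ τ = ∑ σ with p σ, K τ σ :=
          sum_congr rfl fun σ hσ => hsymm σ τ (mem_filter.mp hσ).2 hτ
      _ = ∑ σ, K τ σ := sum_filter_of_ne fun σ _ h => by_contra fun hσ => h (hclosed τ σ hτ hσ)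
      _ = 1 := hsum τ hτ
  · exact sum_eq_zero fun σ hσ => hclosed σ τ (mem_filter.mp hσ).2 hτ

namespace LocalGlauber

variable {V : Type*} {G : SimpleGraph V} {q : ℕ}

theorem isProper_glauberStep {σ : V → Fin q} (hσ : IsProper G σ) (c : V → Fin q) :
    IsProper G (glauberStep G σ c) := by
  intro x y hxy
  by_cases hx : Accept G σ c x <;> by_cases hy : Accept G σ c y <;>
    simp only [glauberStep, hx, hy, if_true, if_false]
  · exact (hx y hxy).2.1
  · exact (hx y hxy).1
  · exact (hy x hxy.symm).1.symm
  · exact hσ hxy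

variable (G) in
noncomputable def reverseProposal (σ c : V → Fin q) : V → Fin q :=
  fun v => if Accept G σ c v then σ v else c v

theorem accept_reverseProposal_iff {σ : V → Fin q} (hσ : IsProper G σ) (c : V → Fin q)
    (v : V) : Accept G (glauberStep G σ c) (reverseProposal G σ c) v ↔ Accept G σ c v := by
  constructor
  · intro hrev
    by_contra hv
    refine hv fun u hvu => ?_
    have h := hrev u hvu
    by_cases hu : Accept G σ c u
    · simp only [reverseProposal, glauberStep, hv, hu, if_true, if_false] at h
      exact ⟨h.2.1, h.1, (hu v hvu.symm).1, (hu v hvu.symm).2.1⟩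
    · simpa only [reverseProposal, glauberStep, hv, hu, if_false] using h
  · intro hv u hvu
    have h := hv u hvu
    have hσvu : σ v ≠ σ u := hσ hvu
    by_cases hu : Accept G σ c u
    · simp only [reverseProposal, glauberStep, hv, hu, if_true]
      exact ⟨h.2.2.1.symm, hσvu, h.1.symm, hσvu.symm⟩
    · simp only [reverseProposal, glauberStep, hv, hu, if_true, if_false]
      exact ⟨hσvu, h.2.2.1.symm, h.2.2.2, h.2.2.1⟩

theorem glauberStep_reverseProposal {σ : V → Fin q} (hσ : IsProper G σ) (c : V → Fin q) :
    glauberStep G (glauberStep G σ c) (reverseProposal G σ c) = σ := by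
  funext v
  by_cases hv : Accept G σ c v <;>
    simp [glauberStep, reverseProposal, accept_reverseProposal_iff hσ, hv]

theorem reverseProposal_reverseProposal {σ : V → Fin q} (hσ : IsProper G σ) (c : V → Fin q) :
    reverseProposal G (glauberStep G σ c) (reverseProposal G σ c) = c := by
  funext v
  by_cases hv : Accept G σ c v <;>
    simp [glauberStep, reverseProposal, accept_reverseProposal_iff hσ, hv]

variable [Fintype V]

theorem glauberWeight_reverseProposal (γ : ℝ) (m : V → Bool) (σ c : V → Fin q) :
    glauberWeight γ (glauberStep G σ c) m (reverseProposal G σ c) = glauberWeight γ σ m c := by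
  refine prod_congr rfl fun v _ => ?_
  by_cases hv : Accept G σ c v <;> simp [glauberStep, reverseProposal, hv, eq_comm (a := σ v)]

variable [DecidableEq V]

theorem P_comm {σ τ : V → Fin q} (γ : ℝ) (hσ : IsProper G σ) (hτ : IsProper G τ) :
    P G q γ σ τ = P G q γ τ σ := by
  refine sum_congr rfl fun m _ => ?_
  rw [← sum_filter, ← sum_filter]
  refine sum_nbij' (reverseProposal G σ) (reverseProposal G τ) ?_ ?_ ?_ ?_ ?_ <;>
    intro c hc <;> obtain ⟨-, rfl⟩ := mem_filter.mp hc
  · exact mem_filter.mpr ⟨mem_univ _, glauberStep_reverseProposal hσ c⟩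
  · exact mem_filter.mpr ⟨mem_univ _, glauberStep_reverseProposal hτ c⟩
  · exact reverseProposal_reverseProposal hσ c
  · exact reverseProposal_reverseProposal hτ c
  · exact (glauberWeight_reverseProposal γ m σ c).symm

theorem P_eq_zero_of_not_isProper {σ τ : V → Fin q} (γ : ℝ) (hσ : IsProper G σ)
    (hτ : ¬ IsProper G τ) : P G q γ σ τ = 0 :=
  sum_eq_zero fun _ _ => sum_eq_zero fun c _ =>
    if_neg fun h : glauberStep G σ c = τ => hτ (h ▸ isProper_glauberStep hσ c)

theorem sum_glauberWeight (γ : ℝ) (σ : V → Fin q) (m : V → Bool) :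
    ∑ c : V → Fin q, glauberWeight γ σ m c = ∏ v, if m v then γ else 1 - γ := by
  simp only [glauberWeight]
  rw [← Fintype.prod_sum fun v k => if m v then γ / q else if k = σ v then 1 - γ else 0]
  refine prod_congr rfl fun v _ => ?_
  have hq : (q : ℝ) ≠ 0 := Nat.cast_ne_zero.mpr (Fin.pos (σ v)).ne'
  cases m v
  · simp
  · simp [mul_div_cancel₀ γ hq]

theorem sum_P (γ : ℝ) (σ : V → Fin q) : ∑ τ, P G q γ σ τ = 1 := by
  have hfiber (m : V → Bool) (c : V → Fin q) :
      ∑ τ, (if glauberStep G σ c = τ then glauberWeight γ σ m c else 0) =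
        glauberWeight γ σ m c :=
    Fintype.sum_ite_eq _ _
  simp only [P, sum_comm (γ := V → Fin q), hfiber, sum_glauberWeight]
  rw [← Fintype.prod_sum fun (_ : V) (b : Bool) => if b then γ else 1 - γ]
  simp

end LocalGlauber

open LocalGlauber in
theorem local_glauber_stationary_general {V : Type*} [Fintype V] [DecidableEq V]
    (G : SimpleGraph V) (q : ℕ) (γ : ℝ) (τ : V → Fin q) :
    ∑ σ : V → Fin q, uniformProper G q σ * P G q γ σ τ = uniformProper G q τ := by
  have huniform (σ : V → Fin q) : uniformProper G q σ =
      (if IsProper G σ then 1 else 0) / (univ.filter fun ρ : V → Fin q => IsProper G ρ).card := by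
    unfold uniformProper
    split_ifs <;> simp
  have hbalance := sum_filter_eq_ite_of_symm (IsProper G) (P G q γ)
    (fun _ _ => P_comm γ) (fun _ _ => P_eq_zero_of_not_isProper γ) (fun σ _ => sum_P γ σ) τ
  simp only [huniform, div_mul_eq_mul_div, ite_mul, one_mul, zero_mul, ← sum_div,
    ← sum_filter, hbalance]

open LocalGlauber in
/-- If `q ≥ Δ + 1`, the uniform distribution over the (nonempty) set of proper
`q`-colorings of `G` is stationary for the Local Glauber dynamics. -/
theorem local_glauber_stationary {V : Type*} [Fintype V] [DecidableEq V]
    (G : SimpleGraph V) (q : ℕ) (γ : ℝ) (hγ0 : 0 < γ) (hγ1 : γ < 1)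
    (hq : G.maxDegree + 1 ≤ q) (τ : V → Fin q) :
    ∑ σ : V → Fin q, uniformProper G q σ * P G q γ σ τ = uniformProper G q τ :=
  local_glauber_stationary_general G q γ τ
end
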